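/- arXiv:2412.17930 — 2 statements merged into one kernel-verified Lean document; each statement's English description precedes it below -/
import Mathlib

section
/- The run-length sequence of every infinite paperfolding sequence is overlap-free: it contains no factor of the form a·x·a·x·a where a is a single symbol and x is a possibly empty word. -/
/-!
The paperfolding sequence has the closed form `p (2^a (2k+1)) = (-1)^k f_a`. Its odd-indexed
terms alternate, so each pair of positions `2t+1, 2t+2` holds exactly one run end and the `j`-th
run ends at `2j - 1` or `2j`; which of the two is recorded by the sign `p (2j) p (2j+1)`, which
is again a paperfolding sequence (with instructions `±f_{a+1} f_0`). An overlap of period `n`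
in the run lengths forces `E (j+n) = E j + 2n` on a window of `n + 2` indices, so it makes that
sign sequence `n`-periodic on the window. This is impossible: for `n = 2^(a+1) · odd` the sign
flips between `j` and `j + n` at the window's `j` of the form `2^a (2k+1)`, and for odd `n` it
flips between an odd `j` and `j + 2n`.
-/

/-- Paperfolding word; instructions are given with the most recent (last) instruction first. -/
def foldAux : List ℤ → List ℤ
  | [] => []
  | a :: f => foldAux f ++ a :: (foldAux f).reverse.map (fun x => -x)

/-- `paper f` is the finite paperfolding word `P_f` for instructions `f = [f_0, f_1, …]`,
satisfying `P_ε = ε` and `P_{f·a} = P_f · a · (-P_f^R)`. -/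
def paper (f : List ℤ) : List ℤ := foldAux f.reverse

/-- The sequence of lengths of the maximal runs (maximal blocks of equal symbols) of `w`. -/
def runLengths (w : List ℤ) : List ℕ := (w.splitBy (fun a b => a == b)).map List.length

/-- `p` (indexed from 1) is the infinite paperfolding sequence with instructions `f`,
i.e. every finite paperfolding word of a prefix of `f` is a prefix of `p`. -/
def IsLimit (f : ℕ → ℤ) (p : ℕ → ℤ) : Prop :=
  ∀ m k, k < (paper ((List.range m).map f)).length →
    p (k + 1) = (paper ((List.range m).map f)).getD k 0

/-- `E` enumerates, in increasing order (`E 1 < E 2 < ⋯`, with the convention `E 0 = 0`),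
the ending positions of the maximal runs of the sequence `p` (indexed from 1):
position `m ≥ 1` ends a run iff `p m ≠ p (m+1)`. -/
def IsRunEnds (p : ℕ → ℤ) (E : ℕ → ℕ) : Prop :=
  E 0 = 0 ∧ StrictMono E ∧ ∀ m, 1 ≤ m → ((∃ n, 1 ≤ n ∧ E n = m) ↔ p m ≠ p (m + 1))

lemma neg_one_pow_eq_neg_of_odd_add {k l : ℕ} (h : Odd (k + l)) :
    (-1 : ℤ) ^ k = -(-1) ^ l := by
  have := h.neg_one_pow (α := ℤ)
  rw [pow_add] at this
  rcases neg_one_pow_eq_or ℤ l with hl | hl <;> rw [hl] at this ⊢ <;> linarith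

lemma length_foldAux (l : List ℤ) : (foldAux l).length = 2 ^ l.length - 1 := by
  induction l with
  | nil => rfl
  | cons a l ih =>
    simp only [foldAux, List.length_append, List.length_cons, List.length_map,
      List.length_reverse, ih, pow_succ]
    have := Nat.one_le_two_pow (n := l.length)
    omega

lemma length_paper_range_map (f : ℕ → ℤ) (m : ℕ) :
    (paper ((List.range m).map f)).length = 2 ^ m - 1 := by
  simp [paper, length_foldAux]

lemma paper_append_singleton (l : List ℤ) (a : ℤ) :
    paper (l ++ [a]) = paper l ++ a :: (paper l).reverse.map (fun x => -x) := by
  simp [paper, foldAux]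

lemma getD_append_cons_map_neg_reverse (P : List ℤ) (x : ℤ) {j : ℕ} (hj : j < P.length) :
    (P ++ x :: P.reverse.map (fun y => -y)).getD (2 * P.length - j) 0 = -P.getD j 0 := by
  rw [List.getD_append_right _ _ _ _ (by omega), show 2 * P.length - j - P.length =
    P.length - 1 - j + 1 by omega, List.getD_cons_succ, ← neg_zero, List.getD_map,
    List.getD_reverse _ (by omega), neg_zero, show P.length - 1 - (P.length - 1 - j) = j by omega]

lemma getD_paper_two_pow_mul_odd (f : ℕ → ℤ) {m a k : ℕ} (h : 2 ^ a * (2 * k + 1) < 2 ^ m) :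
    (paper ((List.range m).map f)).getD (2 ^ a * (2 * k + 1) - 1) 0 = (-1) ^ k * f a := by
  induction m generalizing a k with
  | zero => simp at h
  | succ m ih =>
    rw [List.range_succ, List.map_append, List.map_singleton, paper_append_singleton]
    set P := paper ((List.range m).map f)
    have hP : P.length = 2 ^ m - 1 := length_paper_range_map f m
    rcases lt_trichotomy a m with ham | rfl | hma
    · obtain ⟨d, rfl⟩ := Nat.exists_eq_add_of_lt ham
      set A := 2 ^ a
      set K := 2 ^ d
      have hA : 0 < A := by positivity
      have hm : 2 ^ (a + d + 1) = A * (2 * K) := by rw [pow_succ, pow_add]; ring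
      rw [hm] at ih hP
      rw [pow_succ, hm, mul_assoc, mul_assoc] at h
      have hk := Nat.lt_of_mul_lt_mul_left h
      rcases lt_or_gt_of_ne (show 2 * k + 1 ≠ 2 * K by omega) with hleft | hright
      · have hlt : A * (2 * k + 1) < A * (2 * K) := Nat.mul_lt_mul_of_pos_left hleft hA
        rw [List.getD_append _ _ _ _ (by omega)]
        exact ih hlt
      · -- the reflected half: position `A(2k+1)` mirrors `A(2k'+1)`, with `k + k'` odd
        set k' := 2 * K - 1 - k
        have hsum : A * (2 * k' + 1) + A * (2 * k + 1) = A * (2 * K) * 2 := by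
          rw [← mul_add, mul_assoc]; congr 1; omega
        have hlt : A * (2 * k' + 1) < A * (2 * K) := Nat.mul_lt_mul_of_pos_left (by omega) hA
        have hpos : 0 < A * (2 * k' + 1) := by positivity
        have hmirror := getD_append_cons_map_neg_reverse P (f (a + d + 1))
          (j := A * (2 * k' + 1) - 1) (by omega)
        rw [show 2 * P.length - (A * (2 * k' + 1) - 1) = A * (2 * k + 1) - 1 by omega,
          ih hlt] at hmirror
        rw [hmirror, neg_one_pow_eq_neg_of_odd_add (l := k) (Nat.odd_iff.mpr (by omega))]
        ring
    · have hk : k = 0 := by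
        have := Nat.lt_of_mul_lt_mul_left (h.trans_eq (pow_succ 2 a))
        omega
      subst hk
      rw [List.getD_append_right _ _ _ _ (by omega)]
      simp [hP]
    · have : 2 ^ (m + 1) ≤ 2 ^ a * (2 * k + 1) :=
        (Nat.pow_le_pow_right two_pos hma).trans (Nat.le_mul_of_pos_right _ (by omega))
      omega

def IsPaperfolding (f w : ℕ → ℤ) : Prop :=
  ∀ a k, w (2 ^ a * (2 * k + 1)) = (-1) ^ k * f a

-- For a `±1`-valued `p`, `pairProd p j = -1` exactly when position `2j` ends a run of `p`.
def pairProd (p : ℕ → ℤ) (j : ℕ) : ℤ := p (2 * j) * p (2 * j + 1)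

theorem IsLimit.isPaperfolding {f p : ℕ → ℤ} (hp : IsLimit f p) : IsPaperfolding f p := by
  intro a k
  have hlt : 2 ^ a * (2 * k + 1) < 2 ^ (a + (2 * k + 1)) := by
    rw [pow_add]; exact Nat.mul_lt_mul_of_pos_left Nat.lt_two_pow_self (by positivity)
  have hpos : 0 < 2 ^ a * (2 * k + 1) := by positivity
  have := hp (a + (2 * k + 1)) (2 ^ a * (2 * k + 1) - 1) (by rw [length_paper_range_map]; omega)
  rwa [Nat.sub_add_cancel hpos, getD_paper_two_pow_mul_odd f hlt] at this

theorem exists_two_pow_mul_odd_mem_Ico (a A : ℕ) :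
    ∃ k, A ≤ 2 ^ a * (2 * k + 1) ∧ 2 ^ a * (2 * k + 1) < A + 2 ^ (a + 1) := by
  induction A with
  | zero => exact ⟨0, by positivity, by simp [pow_succ]⟩
  | succ A ih =>
    obtain ⟨k, hk1, hk2⟩ := ih
    by_cases h : A + 1 ≤ 2 ^ a * (2 * k + 1)
    · exact ⟨k, h, by omega⟩
    · have : 2 ^ a * (2 * (k + 1) + 1) = 2 ^ a * (2 * k + 1) + 2 ^ (a + 1) := by ring
      exact ⟨k + 1, by omega, by omega⟩

namespace IsPaperfolding

variable {f w : ℕ → ℤ}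

theorem apply_two_mul_add_one (hw : IsPaperfolding f w) (t : ℕ) :
    w (2 * t + 1) = (-1) ^ t * f 0 := by
  simpa using hw 0 t

theorem apply_add_two_pow_succ_mul_odd (hw : IsPaperfolding f w) (a k m : ℕ) :
    w (2 ^ a * (2 * k + 1) + 2 ^ (a + 1) * (2 * m + 1)) = -w (2 ^ a * (2 * k + 1)) := by
  rw [show 2 ^ a * (2 * k + 1) + 2 ^ (a + 1) * (2 * m + 1) =
    2 ^ a * (2 * (k + (2 * m + 1)) + 1) by ring, hw, hw,
    neg_one_pow_eq_neg_of_odd_add (l := k) (Nat.odd_iff.mpr (by omega))]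
  ring

theorem apply_eq_neg_one_or_one (hw : IsPaperfolding f w) (hf : ∀ a, f a = -1 ∨ f a = 1)
    {j : ℕ} (hj : j ≠ 0) : w j = -1 ∨ w j = 1 := by
  obtain ⟨a, _, ⟨k, rfl⟩, rfl⟩ := Nat.exists_eq_two_pow_mul_odd hj
  rw [hw]
  rcases hf a with h | h <;> rcases neg_one_pow_eq_or ℤ k with h' | h' <;> simp [h, h']

theorem apply_two_mul_add_one_ne_iff (hw : IsPaperfolding f w)
    (hf : ∀ a, f a = -1 ∨ f a = 1) (t : ℕ) :
    w (2 * t + 1) ≠ w (2 * t + 2) ↔ w (2 * t + 2) = w (2 * t + 3) := by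
  have h3 : w (2 * t + 3) = -w (2 * t + 1) := by
    rw [show 2 * t + 3 = 2 * (t + 1) + 1 by ring, hw.apply_two_mul_add_one,
      hw.apply_two_mul_add_one, pow_succ]
    ring
  rcases hw.apply_eq_neg_one_or_one hf (j := 2 * t + 1) (by omega) with h1 | h1 <;>
    rcases hw.apply_eq_neg_one_or_one hf (j := 2 * t + 2) (by omega) with h2 | h2 <;>
    rw [h3, h1, h2] <;> norm_num

theorem pairProd (hw : IsPaperfolding f w) :
    IsPaperfolding (fun a => (-1) ^ 2 ^ a * f (a + 1) * f 0) (pairProd w) := by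
  intro a k
  beta_reduce
  rw [_root_.pairProd, hw.apply_two_mul_add_one,
    show 2 * (2 ^ a * (2 * k + 1)) = 2 ^ (a + 1) * (2 * k + 1) by ring, hw, pow_mul]
  rcases neg_one_pow_eq_or ℤ (2 ^ a) with h | h <;> rw [h]
  · rw [one_pow]; ring
  · rw [(odd_two_mul_add_one k).neg_one_pow]; ring

theorem exists_apply_ne_apply_add (hw : IsPaperfolding f w) (hf : ∀ a, f a ≠ 0) {n : ℕ}
    (hn : Even n) (hn0 : n ≠ 0) (A : ℕ) : ∃ j, A ≤ j ∧ j < A + n ∧ w j ≠ w (j + n) := by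
  obtain ⟨e, _, ⟨m, rfl⟩, rfl⟩ := Nat.exists_eq_two_pow_mul_odd hn0
  obtain ⟨a, rfl⟩ : ∃ a, e = a + 1 :=
    Nat.exists_eq_succ_of_ne_zero (by rintro rfl; simp [parity_simps] at hn)
  obtain ⟨k, hk1, hk2⟩ := exists_two_pow_mul_odd_mem_Ico a A
  refine ⟨_, hk1, hk2.trans_le (by gcongr; exact Nat.le_mul_of_pos_right _ (by omega)), ?_⟩
  rw [hw.apply_add_two_pow_succ_mul_odd, hw]
  have := mul_ne_zero (pow_ne_zero k (neg_ne_zero.mpr one_ne_zero)) (hf a)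
  intro h
  exact this (by linarith)

theorem apply_ne_apply_add_add (hw : IsPaperfolding f w) (hf : ∀ a, f a ≠ 0) {A n : ℕ}
    (hA : Odd A) (hn : Odd n) : w A ≠ w (A + n + n) := by
  obtain ⟨t, rfl⟩ := hA
  obtain ⟨m, rfl⟩ := hn
  have := hw.apply_add_two_pow_succ_mul_odd 0 t m
  simp only [pow_zero, one_mul, zero_add, pow_one] at this
  rw [show 2 * t + 1 + (2 * m + 1) + (2 * m + 1) = 2 * t + 1 + 2 * (2 * m + 1) by ring, this,
    hw.apply_two_mul_add_one]
  have := mul_ne_zero (pow_ne_zero t (neg_ne_zero.mpr one_ne_zero)) (hf 0)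
  intro h
  exact this (by linarith)

end IsPaperfolding

theorem add_eq_add_two_mul_of_sub_eq_sub {E : ℕ → ℕ}
    (hE : ∀ j, 2 * j ≤ E j + 1 ∧ E j ≤ 2 * j) {i n : ℕ} (hi : 1 ≤ i)
    (hruns : ∀ t ≤ n, E (i + t) - E (i + t - 1) = E (i + n + t) - E (i + n + t - 1)) :
    ∀ j, i - 1 ≤ j → j ≤ i + n → E (j + n) = E j + 2 * n := by
  set s := i - 1
  -- `E (j + n) - E j` is constant on the window; since `E j ∈ {2j - 1, 2j}`, its agreeing
  -- values at `s` and `s + n` force it to be `2n`.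
  have hdrift : ∀ t ≤ n + 1, E (s + t + n) + E s = E (s + t) + E (s + n) := by
    intro t ht
    induction t with
    | zero => exact add_comm _ _
    | succ t ih =>
      have h := hruns t (by omega)
      rw [show i + t - 1 = s + t by omega, show i + n + t - 1 = s + t + n by omega,
        show i + t = s + t + 1 by omega, show i + n + t = s + t + 1 + n by omega] at h
      have := ih (by omega)
      have := hE (s + t); have := hE (s + t + 1); have := hE (s + t + n); have := hE (s + t + 1 + n)
      rw [← add_assoc s t 1]
      omega
  have hs : E (s + n) = E s + 2 * n := by
    have := hdrift n (by omega)
    have := hE s; have := hE (s + n); have := hE (s + n + n)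
    omega
  intro j hj1 hj2
  have := hdrift (j - s) (by omega)
  rw [show s + (j - s) = j by omega] at this
  omega

namespace IsRunEnds

variable {p : ℕ → ℤ} {E : ℕ → ℕ}

theorem two_mul_le_add_one_and_le_two_mul (hE : IsRunEnds p E)
    (hpair : ∀ t, p (2 * t + 1) ≠ p (2 * t + 2) ↔ p (2 * t + 2) = p (2 * t + 3)) (j : ℕ) :
    2 * j ≤ E j + 1 ∧ E j ≤ 2 * j := by
  obtain ⟨hE0, hmono, hends⟩ := hE
  induction j with
  | zero => simp [hE0]
  | succ n ih =>
    have hlt : E n < E (n + 1) := hmono (by omega)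
    constructor
    · by_contra hcon
      have h1 := (hends (2 * n - 1) (by omega)).1 ⟨n, by omega, by omega⟩
      have h2 := (hends (2 * n) (by omega)).1 ⟨n + 1, by omega, by omega⟩
      have h := hpair (n - 1)
      rw [show 2 * (n - 1) + 1 = 2 * n - 1 by omega, show 2 * (n - 1) + 2 = 2 * n by omega,
        show 2 * (n - 1) + 3 = 2 * n + 1 by omega] at h
      rw [show 2 * n - 1 + 1 = 2 * n by omega] at h1
      exact h2 (h.1 h1)
    · obtain ⟨m, hm, hEm⟩ : ∃ m, 1 ≤ m ∧ (E m = 2 * n + 1 ∨ E m = 2 * n + 2) := by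
        by_cases h : p (2 * n + 1) = p (2 * n + 2)
        · obtain ⟨m, hm, hEm⟩ := (hends (2 * n + 2) (by omega)).2 ((hpair n).not.mp (by tauto))
          exact ⟨m, hm, .inr hEm⟩
        · obtain ⟨m, hm, hEm⟩ := (hends (2 * n + 1) (by omega)).2 h
          exact ⟨m, hm, .inl hEm⟩
      have : n < m := hmono.lt_iff_lt.1 (by omega)
      have := hmono.monotone (show n + 1 ≤ m by omega)
      omega

theorem eq_two_mul_iff (hE : IsRunEnds p E)
    (hpair : ∀ t, p (2 * t + 1) ≠ p (2 * t + 2) ↔ p (2 * t + 2) = p (2 * t + 3)) {j : ℕ}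
    (hj : 1 ≤ j) : E j = 2 * j ↔ p (2 * j) ≠ p (2 * j + 1) := by
  refine ⟨fun h => (hE.2.2 _ (by omega)).1 ⟨j, hj, h⟩, fun h => ?_⟩
  obtain ⟨m, -, hEm⟩ := (hE.2.2 _ (by omega)).2 h
  have := hE.two_mul_le_add_one_and_le_two_mul hpair m
  obtain rfl : m = j := by omega
  exact hEm

theorem pairProd_eq (hE : IsRunEnds p E)
    (hpair : ∀ t, p (2 * t + 1) ≠ p (2 * t + 2) ↔ p (2 * t + 2) = p (2 * t + 3))
    (hpm : ∀ j, j ≠ 0 → p j = -1 ∨ p j = 1) {j : ℕ} (hj : 1 ≤ j) :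
    pairProd p j = 4 * j - 1 - 2 * E j := by
  have hb := hE.two_mul_le_add_one_and_le_two_mul hpair j
  have hiff := hE.eq_two_mul_iff hpair hj
  rcases hpm (2 * j) (by omega) with h1 | h1 <;> rcases hpm (2 * j + 1) (by omega) with h2 | h2 <;>
    simp only [pairProd, h1, h2] at hiff ⊢ <;> norm_num at hiff ⊢ <;> omega

end IsRunEnds

theorem runSeq_overlapFree (f p : ℕ → ℤ) (E : ℕ → ℕ)
    (hf : ∀ n, f n = -1 ∨ f n = 1) (hp : IsLimit f p) (hE : IsRunEnds p E) :
    ¬ ∃ i n : ℕ, 1 ≤ i ∧ 1 ≤ n ∧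
      ∀ t ≤ n, E (i + t) - E (i + t - 1) = E (i + n + t) - E (i + n + t - 1) := by
  rintro ⟨i, n, hi, hn, hruns⟩
  have hpf := hp.isPaperfolding
  have hpair := hpf.apply_two_mul_add_one_ne_iff hf
  have hshift :=
    add_eq_add_two_mul_of_sub_eq_sub (hE.two_mul_le_add_one_and_le_two_mul hpair) hi hruns
  have hpm := fun j => hpf.apply_eq_neg_one_or_one hf (j := j)
  have hperiodic : ∀ j, 1 ≤ j → i - 1 ≤ j → j ≤ i + n → pairProd p j = pairProd p (j + n) := by
    intro j hj hj1 hj2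
    rw [hE.pairProd_eq hpair hpm hj, hE.pairProd_eq hpair hpm (by omega), hshift j hj1 hj2]
    push_cast
    ring
  have hf0 : ∀ a, (-1) ^ 2 ^ a * f (a + 1) * f 0 ≠ 0 := fun a => by
    rcases hf (a + 1) with h1 | h1 <;> rcases hf 0 with h2 | h2 <;> simp [h1, h2]
  rcases Nat.even_or_odd n with heven | hodd
  · obtain ⟨j, hj1, hj2, hne⟩ := hpf.pairProd.exists_apply_ne_apply_add hf0 heven (by omega) i
    exact hne (hperiodic j (by omega) (by omega) (by omega))
  · obtain ⟨A, hA, hA1, hA2⟩ : ∃ A, Odd A ∧ i - 1 ≤ A ∧ A ≤ i := by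
      rcases Nat.even_or_odd i with ⟨u, hu⟩ | hi'
      · exact ⟨i - 1, ⟨u - 1, by omega⟩, by omega, by omega⟩
      · exact ⟨i, hi', by omega, le_rfl⟩
    have hA0 : 1 ≤ A := hA.pos
    exact hpf.pairProd.apply_ne_apply_add_add hf0 hA hodd <|
      (hperiodic A hA0 hA1 (by omega)).trans (hperiodic (A + n) (by omega) (by omega) (by omega))
end

section
/- The only palindromic factors occurring in the run-length sequence of any infinite paperfolding sequence are 1, 2, 3, 22, 212, 232, 12321, and 32123. -/
section Fold
variable (W : List ℤ) (a : ℤ)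

theorem getD_fold_of_lt {n : ℕ} (hn : n < W.length) :
    (W ++ a :: (W.reverse.map fun x => -x)).getD n 0 = W.getD n 0 :=
  List.getD_append _ _ _ _ hn

theorem getD_fold_length : (W ++ a :: (W.reverse.map fun x => -x)).getD W.length 0 = a := by
  simp

theorem getD_fold_of_length_lt {n : ℕ} (h₁ : W.length < n) (h₂ : n ≤ 2 * W.length) :
    (W ++ a :: (W.reverse.map fun x => -x)).getD n 0 = -W.getD (2 * W.length - n) 0 := by
  obtain ⟨t, rfl⟩ : ∃ t, n = W.length + (t + 1) := ⟨n - W.length - 1, by omega⟩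
  rw [List.getD_append_right _ _ _ _ (by omega), Nat.add_sub_cancel_left, List.getD_cons_succ,
    List.getD_eq_getElem _ _ (by simp; omega), List.getD_eq_getElem _ _ (by omega)]
  simp only [List.getElem_map, List.getElem_reverse]
  congr 2
  omega

end Fold

theorem paper_range_succ (f : ℕ → ℤ) (m : ℕ) :
    paper ((List.range (m + 1)).map f) =
      paper ((List.range m).map f) ++
        f m :: ((paper ((List.range m).map f)).reverse.map fun x => -x) := by
  simp [List.range_succ, paper, foldAux]

theorem paper_length (l : List ℤ) : (paper l).length = 2 ^ l.length - 1 := by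
  rw [paper, ← List.length_reverse (as := l)]
  induction l.reverse with
  | nil => simp [foldAux]
  | cons a l ih =>
    simp only [foldAux, List.length_append, List.length_cons, List.length_map,
      List.length_reverse, ih, pow_succ]
    have := Nat.one_le_two_pow (n := l.length)
    omega

theorem two_pow_mul_odd_eq_two_pow {k j m : ℕ} (h : 2 ^ k * (2 * j + 1) = 2 ^ m) :
    k = m ∧ j = 0 := by
  have hodd : 2 * j + 1 = 1 :=
    ((Nat.coprime_two_left.2 (odd_two_mul_add_one j)).pow_left m).symm.eq_one_of_dvd
      ⟨2 ^ k, by rw [← h, mul_comm]⟩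
  refine ⟨Nat.pow_right_injective le_rfl ?_, by omega⟩
  simpa [hodd] using h

theorem two_pow_succ_sub_two_pow_mul_odd {k j m : ℕ} (h₁ : 2 ^ m < 2 ^ k * (2 * j + 1))
    (h₂ : 2 ^ k * (2 * j + 1) < 2 ^ (m + 1)) :
    ∃ j', 2 ^ k * (2 * j' + 1) = 2 ^ (m + 1) - 2 ^ k * (2 * j + 1) ∧ Odd (j + j') := by
  obtain ⟨d, rfl⟩ : ∃ d, m = k + d + 1 := by
    refine ⟨m - k - 1, ?_⟩
    by_contra hkm
    obtain ⟨q, hq⟩ : 2 ^ m ∣ 2 ^ k * (2 * j + 1) := (pow_dvd_pow 2 (by omega)).mul_right _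
    rw [hq, pow_succ] at h₂
    rw [hq] at h₁
    have := (Nat.lt_mul_iff_one_lt_right (by positivity)).1 h₁
    have := Nat.lt_of_mul_lt_mul_left h₂
    omega
  rw [show 2 ^ (k + d + 1) = 2 ^ k * (2 * 2 ^ d) by ring] at h₁
  rw [show 2 ^ (k + d + 1 + 1) = 2 ^ k * (4 * 2 ^ d) by ring] at h₂ ⊢
  have := Nat.lt_of_mul_lt_mul_left h₁
  have := Nat.lt_of_mul_lt_mul_left h₂
  refine ⟨2 * 2 ^ d - j - 1, ?_, ⟨2 ^ d - 1, by omega⟩⟩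
  rw [← Nat.mul_sub]
  congr 1
  omega

theorem paper_getD_two_pow_mul_odd (f : ℕ → ℤ) (m k j : ℕ)
    (h : 2 ^ k * (2 * j + 1) < 2 ^ m) :
    (paper ((List.range m).map f)).getD (2 ^ k * (2 * j + 1) - 1) 0 = (-1) ^ j * f k := by
  induction m generalizing j with
  | zero => have := Nat.one_le_two_pow (n := k); simp at h
  | succ m ih =>
    have hW : (paper ((List.range m).map f)).length + 1 = 2 ^ m := by
      rw [paper_length, List.length_map, List.length_range]
      have := Nat.one_le_two_pow (n := m)
      omega
    have hN : 0 < 2 ^ k * (2 * j + 1) := by positivity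
    rw [paper_range_succ]
    rcases lt_trichotomy (2 ^ k * (2 * j + 1)) (2 ^ m) with hlt | heq | hgt
    · rw [getD_fold_of_lt, ih j hlt]
      omega
    · obtain ⟨rfl, rfl⟩ := two_pow_mul_odd_eq_two_pow heq
      rw [heq, show 2 ^ k - 1 = (paper ((List.range k).map f)).length by omega, getD_fold_length]
      simp
    · -- the mirror image `2 ^ (m + 1) - N` of `N` has the same `k` and a `j'` of the other parity
      obtain ⟨j', hj', hodd⟩ := two_pow_succ_sub_two_pow_mul_odd hgt h
      have hlt : 2 ^ k * (2 * j' + 1) < 2 ^ m := by rw [pow_succ] at h hj'; omega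
      rw [getD_fold_of_length_lt _ _ (by omega) (by rw [pow_succ] at h; omega),
        show 2 * (paper ((List.range m).map f)).length - (2 ^ k * (2 * j + 1) - 1) =
          2 ^ k * (2 * j' + 1) - 1 by rw [pow_succ] at hj'; omega,
        ih j' hlt]
      have hsign : (-1 : ℤ) ^ j' = -(-1) ^ j := by
        have h := hodd.neg_one_pow (α := ℤ)
        rw [pow_add] at h
        rcases neg_one_pow_eq_or ℤ j with h1 | h1 <;> rw [h1] at h ⊢ <;> linarith
      rw [hsign]
      ring

def joined (p : ℕ → ℤ) (k : ℕ) : ℕ := if 0 < k ∧ p (2 * k) = p (2 * k + 1) then 1 else 0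

theorem joined_le_one (p : ℕ → ℤ) (k : ℕ) : joined p k ≤ 1 := by
  unfold joined; split <;> omega

theorem joined_eq_one_iff {p : ℕ → ℤ} {k : ℕ} (hk : 0 < k) :
    joined p k = 1 ↔ p (2 * k) = p (2 * k + 1) := by
  simp [joined, hk]

namespace IsLimit
variable {f p : ℕ → ℤ}

theorem apply_two_pow_mul_odd (hp : IsLimit f p) (k j : ℕ) :
    p (2 ^ k * (2 * j + 1)) = (-1) ^ j * f k := by
  set N := 2 ^ k * (2 * j + 1)
  have hN : N < 2 ^ N := Nat.lt_two_pow_self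
  have hpos : 0 < N := by positivity
  have h := hp N (N - 1) (by rw [paper_length, List.length_map, List.length_range]; omega)
  rwa [Nat.sub_add_cancel hpos, paper_getD_two_pow_mul_odd f N k j hN] at h

theorem apply_odd (hp : IsLimit f p) (j : ℕ) : p (2 * j + 1) = (-1) ^ j * f 0 := by
  simpa using hp.apply_two_pow_mul_odd 0 j

variable (hf : ∀ n, f n = -1 ∨ f n = 1) (hp : IsLimit f p)
include hf hp

theorem apply_eq_one_or_neg_one {n : ℕ} (hn : n ≠ 0) : p n = 1 ∨ p n = -1 := by
  obtain ⟨k, _, ⟨j, rfl⟩, rfl⟩ := Nat.exists_eq_two_pow_mul_odd hn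
  rw [hp.apply_two_pow_mul_odd]
  rcases neg_one_pow_eq_or ℤ j with h | h <;> rcases hf k with h' | h' <;> simp [h, h']

theorem apply_odd_ne_iff (u : ℕ) :
    p (2 * u + 1) ≠ p (2 * u + 2) ↔ p (2 * u + 2) = p (2 * u + 3) := by
  have hmid := apply_eq_one_or_neg_one hf hp (n := 2 * u + 2) (by omega)
  rw [hp.apply_odd, show 2 * u + 3 = 2 * (u + 1) + 1 by ring, hp.apply_odd, pow_succ]
  rcases neg_one_pow_eq_or ℤ u with h | h <;> rcases hf 0 with h' | h' <;>
    rcases hmid with h'' | h'' <;> simp [h, h', h'']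


theorem joined_add_joined (v j : ℕ) :
    joined p (2 ^ v * (2 * j + 1)) + joined p (2 ^ v * (2 * j + 3)) = 1 := by
  have heven : p (2 * (2 ^ v * (2 * j + 3))) = -p (2 * (2 ^ v * (2 * j + 1))) := by
    rw [show 2 * (2 ^ v * (2 * j + 3)) = 2 ^ (v + 1) * (2 * (j + 1) + 1) by ring,
      show 2 * (2 ^ v * (2 * j + 1)) = 2 ^ (v + 1) * (2 * j + 1) by ring,
      hp.apply_two_pow_mul_odd, hp.apply_two_pow_mul_odd, pow_succ]
    ring
  have hodd : p (2 * (2 ^ v * (2 * j + 3)) + 1) = p (2 * (2 ^ v * (2 * j + 1)) + 1) := by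
    rw [hp.apply_odd, hp.apply_odd,
      show 2 ^ v * (2 * j + 3) = 2 ^ v * (2 * j + 1) + 2 * 2 ^ v by ring, pow_add, pow_mul]
    simp
  have h₁ := apply_eq_one_or_neg_one hf hp (n := 2 * (2 ^ v * (2 * j + 1))) (by positivity)
  have h₂ := apply_eq_one_or_neg_one hf hp (n := 2 * (2 ^ v * (2 * j + 1)) + 1) (by omega)
  simp only [joined, show 0 < 2 ^ v * (2 * j + 1) by positivity,
    show 0 < 2 ^ v * (2 * j + 3) by positivity, true_and, heven, hodd]
  rcases h₁ with h₁ | h₁ <;> rcases h₂ with h₂ | h₂ <;> simp [h₁, h₂]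

theorem joined_add_joined_of_odd {k : ℕ} (hk : k % 2 = 1) :
    joined p k + joined p (k + 2) = 1 := by
  simpa [show 2 * (k / 2) + 1 = k by omega, show 2 * (k / 2) + 3 = k + 2 by omega]
    using joined_add_joined hf hp 0 (k / 2)

theorem joined_add_joined_of_mod_four {k : ℕ} (hk : k % 4 = 2) :
    joined p k + joined p (k + 4) = 1 := by
  simpa [show 2 * (2 * (k / 4) + 1) = k by omega, show 2 * (2 * (k / 4) + 3) = k + 4 by omega]
    using joined_add_joined hf hp 1 (k / 4)

end IsLimit

namespace IsRunEnds
variable {p : ℕ → ℤ} {E : ℕ → ℕ}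

theorem mem_range_iff (hE : IsRunEnds p E) (m : ℕ) :
    m ∈ Set.range E ↔ m = 0 ∨ (1 ≤ m ∧ p m ≠ p (m + 1)) := by
  obtain ⟨hE0, hmono, hends⟩ := hE
  constructor
  · rintro ⟨n, rfl⟩
    rcases Nat.eq_zero_or_pos n with rfl | hn
    · exact Or.inl hE0
    · have : 1 ≤ E n := by have := hmono hn; omega
      exact Or.inr ⟨this, (hends _ this).1 ⟨n, hn, rfl⟩⟩
  · rintro (rfl | ⟨hm, hne⟩)
    · exact ⟨0, hE0⟩
    · obtain ⟨n, -, hn⟩ := (hends m hm).2 hne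
      exact ⟨n, hn⟩

theorem unique {E' : ℕ → ℕ} (hE : IsRunEnds p E) (hE' : IsRunEnds p E') : E = E' :=
  (hE.2.1.range_inj hE'.2.1).1 (Set.ext fun m => by rw [hE.mem_range_iff, hE'.mem_range_iff])

end IsRunEnds

theorem isRunEnds_two_mul_sub_joined {f p : ℕ → ℤ} (hf : ∀ n, f n = -1 ∨ f n = 1)
    (hp : IsLimit f p) : IsRunEnds p (fun n => 2 * n - joined p n) := by
  refine ⟨by simp [joined], strictMono_nat_of_lt_succ fun n => ?_, fun m hm => ?_⟩
  · have := joined_le_one p n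
    have := joined_le_one p (n + 1)
    omega
  dsimp only
  rcases Nat.even_or_odd' m with ⟨u, rfl | rfl⟩
  · have hu : 0 < u := by omega
    rw [← not_iff_not, not_not, ← joined_eq_one_iff hu]
    constructor
    · intro h
      by_contra hc
      have := joined_le_one p u
      exact h ⟨u, hu, by omega⟩
    · rintro h ⟨n, hn, hnm⟩
      have := joined_le_one p n
      obtain ⟨hc, rfl⟩ : joined p n = 0 ∧ n = u := by omega
      omega
  · rw [hp.apply_odd_ne_iff hf, show 2 * u + 2 = 2 * (u + 1) by ring,
      show 2 * u + 3 = 2 * (u + 1) + 1 by ring, ← joined_eq_one_iff (by omega)]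
    constructor
    · rintro ⟨n, hn, hnm⟩
      have := joined_le_one p n
      obtain ⟨hc, rfl⟩ : joined p n = 1 ∧ n = u + 1 := by omega
      exact hc
    · intro hc
      exact ⟨u + 1, by omega, by omega⟩

def IsPalindromeAt (R : ℕ → ℕ) (i n : ℕ) : Prop :=
  ∀ t < n, R (i + t) = R (i + (n - 1) - t)

namespace IsPalindromeAt
variable {R : ℕ → ℕ} {i n : ℕ}

theorem inner (h : IsPalindromeAt R i (n + 2)) : IsPalindromeAt R (i + 1) n := fun t ht => by
  have := h (t + 1) (by omega)
  rwa [show i + (t + 1) = i + 1 + t by omega,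
    show i + (n + 2 - 1) - (t + 1) = i + 1 + (n - 1) - t by omega] at this

theorem ends (h : IsPalindromeAt R i (n + 2)) : R i = R (i + (n + 1)) := by
  simpa using h 0 (by omega)

end IsPalindromeAt

section RunLengths
variable {c R : ℕ → ℕ} (hc : ∀ k, c k ≤ 1)
  (hodd : ∀ k, k % 2 = 1 → c k + c (k + 2) = 1) (hR : ∀ k, R (k + 1) + c (k + 1) = 2 + c k)
include hc hodd hR

/- In the proofs below `omega` does the case analysis on the residue of `j` modulo 4 itself,
through the conditional constraints `hodd` and `htwo`. -/

theorem IsPalindromeAt.of_length_two {j : ℕ} (h : IsPalindromeAt R (j + 1) 2) :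
    R (j + 1) = 2 ∧ R (j + 2) = 2 := by
  have := h.ends
  have := hc j; have := hc (j + 1); have := hc (j + 2)
  have := hR j; have := hR (j + 1); have := hodd j
  simp only [Nat.add_assoc, Nat.reduceAdd] at *
  omega

theorem IsPalindromeAt.of_length_three {j : ℕ} (h : IsPalindromeAt R (j + 1) 3) :
    (R (j + 1) = 2 ∧ R (j + 2) = 1 ∧ R (j + 3) = 2) ∨
      (R (j + 1) = 2 ∧ R (j + 2) = 3 ∧ R (j + 3) = 2) := by
  have := h.ends
  have := hc j; have := hc (j + 1); have := hc (j + 2); have := hc (j + 3)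
  have := hR j; have := hR (j + 1); have := hR (j + 2); have := hodd j; have := hodd (j + 1)
  simp only [Nat.add_assoc, Nat.reduceAdd] at *
  omega

theorem not_isPalindromeAt_four {j : ℕ} : ¬IsPalindromeAt R (j + 1) 4 := by
  intro h
  have := h.inner.of_length_two hc hodd hR
  have := h.ends
  have := hc j; have := hc (j + 1); have := hc (j + 2); have := hc (j + 3); have := hc (j + 4)
  have := hR j; have := hR (j + 1); have := hR (j + 2); have := hR (j + 3)
  have := hodd j; have := hodd (j + 1); have := hodd (j + 2)
  simp only [Nat.add_assoc, Nat.reduceAdd] at *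
  omega

variable (htwo : ∀ k, k % 4 = 2 → c k + c (k + 4) = 1)
include htwo

theorem IsPalindromeAt.of_length_five {j : ℕ} (h : IsPalindromeAt R (j + 1) 5) :
    (R (j + 1) = 1 ∧ R (j + 2) = 2 ∧ R (j + 3) = 3 ∧ R (j + 4) = 2 ∧ R (j + 5) = 1) ∨
      (R (j + 1) = 3 ∧ R (j + 2) = 2 ∧ R (j + 3) = 1 ∧ R (j + 4) = 2 ∧ R (j + 5) = 3) := by
  have hinner := h.inner.of_length_three hc hodd hR
  have hends := h.ends
  have hsum : R (j + 1) + R (j + 3) = 4 := by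
    have := hc j; have := hc (j + 1); have := hc (j + 2); have := hc (j + 3); have := hc (j + 4)
    have := hc (j + 5)
    have := hR j; have := hR (j + 1); have := hR (j + 2); have := hR (j + 3); have := hR (j + 4)
    have := hodd j; have := hodd (j + 3)
    have := htwo j; have := htwo (j + 1)
    simp only [Nat.add_assoc, Nat.reduceAdd] at *
    omega
  simp only [Nat.add_assoc, Nat.reduceAdd] at hinner hends
  omega

theorem not_isPalindromeAt_seven {j : ℕ} : ¬IsPalindromeAt R (j + 1) 7 := by
  intro h
  have := h.inner.of_length_five hc hodd hR htwo
  have := h.ends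
  have := hc j; have := hc (j + 1); have := hc (j + 2); have := hc (j + 3); have := hc (j + 4)
  have := hc (j + 5); have := hc (j + 6); have := hc (j + 7)
  have := hR j; have := hR (j + 1); have := hR (j + 2); have := hR (j + 3); have := hR (j + 4)
  have := hR (j + 5); have := hR (j + 6)
  have := hodd j; have := hodd (j + 5)
  have := htwo j; have := htwo (j + 1); have := htwo (j + 2); have := htwo (j + 3)
  simp only [Nat.add_assoc, Nat.reduceAdd] at *
  omega

theorem IsPalindromeAt.length_lt_six {j n : ℕ} (h : IsPalindromeAt R (j + 1) n) : n < 6 := by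
  induction n using Nat.strong_induction_on generalizing j with
  | _ n ih =>
    by_contra! hn
    obtain ⟨m, rfl⟩ : ∃ m, n = m + 2 := ⟨n - 2, by omega⟩
    rcases (show m = 4 ∨ m = 5 ∨ 6 ≤ m by omega) with rfl | rfl | hm
    · exact not_isPalindromeAt_four hc hodd hR h.inner
    · exact not_isPalindromeAt_seven hc hodd hR htwo h
    · exact absurd (ih m (by omega) h.inner) (by omega)

theorem IsPalindromeAt.classification {i n : ℕ} (hi : 1 ≤ i) (hn : 1 ≤ n)
    (h : IsPalindromeAt R i n) :
    (n = 1 ∧ (R i = 1 ∨ R i = 2 ∨ R i = 3)) ∨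
    (n = 2 ∧ R i = 2 ∧ R (i + 1) = 2) ∨
    (n = 3 ∧ ((R i = 2 ∧ R (i + 1) = 1 ∧ R (i + 2) = 2) ∨
      (R i = 2 ∧ R (i + 1) = 3 ∧ R (i + 2) = 2))) ∨
    (n = 5 ∧ ((R i = 1 ∧ R (i + 1) = 2 ∧ R (i + 2) = 3 ∧ R (i + 3) = 2 ∧ R (i + 4) = 1) ∨
      (R i = 3 ∧ R (i + 1) = 2 ∧ R (i + 2) = 1 ∧ R (i + 3) = 2 ∧ R (i + 4) = 3))) := by
  obtain ⟨j, rfl⟩ : ∃ j, i = j + 1 := ⟨i - 1, by omega⟩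
  have := h.length_lt_six hc hodd hR htwo
  interval_cases n
  · have := hR j; have := hc j; have := hc (j + 1)
    exact Or.inl ⟨rfl, by omega⟩
  · exact Or.inr (Or.inl ⟨rfl, h.of_length_two hc hodd hR⟩)
  · exact Or.inr (Or.inr (Or.inl ⟨rfl, h.of_length_three hc hodd hR⟩))
  · exact (not_isPalindromeAt_four hc hodd hR h).elim
  · exact Or.inr (Or.inr (Or.inr ⟨rfl, h.of_length_five hc hodd hR htwo⟩))

end RunLengths

theorem runSeq_palindromes (f p : ℕ → ℤ) (E : ℕ → ℕ)
    (hf : ∀ n, f n = -1 ∨ f n = 1) (hp : IsLimit f p) (hE : IsRunEnds p E)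
    (R : ℕ → ℕ) (hR : ∀ k, R k = E k - E (k - 1)) :
    ∀ i n : ℕ, 1 ≤ i → 1 ≤ n → (∀ t < n, R (i + t) = R (i + (n - 1) - t)) →
      (n = 1 ∧ (R i = 1 ∨ R i = 2 ∨ R i = 3)) ∨
      (n = 2 ∧ R i = 2 ∧ R (i + 1) = 2) ∨
      (n = 3 ∧ ((R i = 2 ∧ R (i + 1) = 1 ∧ R (i + 2) = 2) ∨
                (R i = 2 ∧ R (i + 1) = 3 ∧ R (i + 2) = 2))) ∨
      (n = 5 ∧ ((R i = 1 ∧ R (i + 1) = 2 ∧ R (i + 2) = 3 ∧ R (i + 3) = 2 ∧ R (i + 4) = 1) ∨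
                (R i = 3 ∧ R (i + 1) = 2 ∧ R (i + 2) = 1 ∧ R (i + 3) = 2 ∧ R (i + 4) = 3))) := by
  have hE' : E = fun n => 2 * n - joined p n := hE.unique (isRunEnds_two_mul_sub_joined hf hp)
  have hRjoined : ∀ k, R (k + 1) + joined p (k + 1) = 2 + joined p k := by
    intro k
    have h0 : joined p 0 = 0 := by simp [joined]
    have := joined_le_one p k
    have := joined_le_one p (k + 1)
    simp only [hR, hE', Nat.add_sub_cancel]
    rcases Nat.eq_zero_or_pos k with rfl | hk <;> omega
  intro i n hi hn h
  exact IsPalindromeAt.classification (joined_le_one p) (fun k => hp.joined_add_joined_of_odd hf)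
    hRjoined (fun k => hp.joined_add_joined_of_mod_four hf) hi hn h
end
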